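/- arXiv:1712.03754 — 2 statements merged into one kernel-verified Lean document; each statement's English description precedes it below -/
import Mathlib

section
/- Let α_j ∈ ℝ, x₁ < … < x_n, and α_k < 0 for some k. Define f(x) = e^{−(α_k/2)x} for x < x_k and f(x) = e^{−α_k x_k} e^{(α_k/2)x} for x ≥ x_k. If (α_k/2)e^{−α_k x_k} + Σ_{x_j < x_k} α_j e^{−α_k x_j} + e^{−2α_k x_k} Σ_{x_j > x_k} α_j e^{α_k x_j} < 0, then ∫_ℝ |f′|² dx + Σ_{j=1}^n α_j |f(x_j)|² < 0. -/
/-!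
Both sides are computed in closed form. Each half-line contributes `-(α_k/4) e^{-α_k x_k}` to
`∫ |f'|²`, while `|f(x_j)|²` is `e^{-α_k x_j}` for `x_j < x_k` and `e^{-2α_k x_k} e^{α_k x_j}` for
`x_j ≥ x_k`; in particular the term `j = k` contributes `α_k e^{-α_k x_k}`. Adding up, the quadratic
form evaluated at `f` is exactly the expression assumed to be negative.
-/

open MeasureTheory

/-- The function `f(x) = e^{-(c/2)x}` for `x < p` and `f(x) = e^{-cp} e^{(c/2)x}` for
`x ≥ p` (the ground state of `-Δ + c δ_p` for `c < 0`). -/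
noncomputable def groundState (c p : ℝ) : ℝ → ℝ := fun y =>
  if y < p then Real.exp (-(c / 2) * y) else Real.exp (-c * p) * Real.exp (c / 2 * y)

/-- Its derivative (away from `p`). -/
noncomputable def groundState' (c p : ℝ) : ℝ → ℝ := fun y =>
  if y < p then -(c / 2) * Real.exp (-(c / 2) * y)
  else Real.exp (-c * p) * (c / 2) * Real.exp (c / 2 * y)

open Real Set

section

variable {c p t : ℝ}

lemma groundState_sq_of_lt (h : t < p) : groundState c p t ^ 2 = exp (-c * t) := by
  rw [groundState, if_pos h, ← exp_nat_mul]
  ring_nf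

lemma groundState_sq_of_le (h : p ≤ t) :
    groundState c p t ^ 2 = exp (-2 * c * p) * exp (c * t) := by
  rw [groundState, if_neg h.not_gt, mul_pow, ← exp_nat_mul, ← exp_nat_mul]
  ring_nf

open Classical in
lemma groundState'_sq_eq_piecewise (c p : ℝ) :
    (fun t => groundState' c p t ^ 2) = (Iio p).piecewise (fun t => c ^ 2 / 4 * exp (-c * t))
      (fun t => c ^ 2 / 4 * exp (-2 * c * p) * exp (c * t)) := by
  funext t
  by_cases h : t < p
  · rw [piecewise_eq_of_mem _ _ _ (mem_Iio.mpr h), groundState', if_pos h, mul_pow, ← exp_nat_mul]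
    ring_nf
  · rw [piecewise_eq_of_notMem _ _ _ (mt mem_Iio.mp h), groundState', if_neg h, mul_pow,
      mul_pow, ← exp_nat_mul, ← exp_nat_mul]
    ring_nf

lemma integral_groundState'_sq (hc : c < 0) (p : ℝ) :
    ∫ t, groundState' c p t ^ 2 = -(c / 2) * exp (-c * p) := by
  have hc' : 0 < -c := neg_pos.mpr hc
  have hleft : IntegrableOn (fun t => c ^ 2 / 4 * exp (-c * t)) (Iio p) :=
    ((integrableOn_exp_mul_Iic hc' p).mono_set Iio_subset_Iic_self).const_mul _
  have hright : IntegrableOn (fun t => c ^ 2 / 4 * exp (-2 * c * p) * exp (c * t)) (Iio p)ᶜ := by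
    rw [compl_Iio, integrableOn_Ici_iff_integrableOn_Ioi]
    exact (integrableOn_exp_mul_Ioi hc p).const_mul _
  rw [groundState'_sq_eq_piecewise, integral_piecewise measurableSet_Iio hleft hright, compl_Iio,
    ← integral_Iic_eq_integral_Iio, integral_Ici_eq_integral_Ioi, integral_const_mul,
    integral_const_mul, integral_exp_mul_Iic hc', integral_exp_mul_Ioi hc]
  have hexp : exp (-2 * c * p) * (-exp (c * p) / c) = -exp (-c * p) / c := by
    rw [mul_div_assoc', mul_neg, ← exp_add]
    ring_nf
  rw [mul_assoc, hexp]
  field_simp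
  ring

lemma sum_mul_groundState_sq {ι : Type*} [Fintype ι] {x : ι → ℝ} (hx : Function.Injective x)
    (α : ι → ℝ) (c : ℝ) (k : ι) :
    ∑ j, α j * groundState c (x k) (x j) ^ 2 =
      ∑ j ∈ Finset.univ.filter (fun j => x j < x k), α j * exp (-c * x j) +
        α k * exp (-c * x k) +
        exp (-2 * c * x k) *
          ∑ j ∈ Finset.univ.filter (fun j => x k < x j), α j * exp (c * x j) := by
  classical
  have hge : Finset.univ.filter (fun j => ¬ x j < x k) =
      insert k (Finset.univ.filter (fun j => x k < x j)) := by
    ext j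
    simp [le_iff_lt_or_eq, hx.eq_iff, eq_comm (a := k), or_comm]
  rw [← Finset.sum_filter_add_sum_filter_not Finset.univ (fun j => x j < x k), hge,
    Finset.sum_insert (by simp), Finset.mul_sum, ← add_assoc]
  congr 1
  · congr 1
    · refine Finset.sum_congr rfl fun j hj => ?_
      rw [groundState_sq_of_lt (Finset.mem_filter.mp hj).2]
    · rw [groundState_sq_of_le le_rfl, ← exp_add]
      ring_nf
  · refine Finset.sum_congr rfl fun j hj => ?_
    rw [groundState_sq_of_le (Finset.mem_filter.mp hj).2.le]
    ring

end

/-- Let `x₁ < … < x_n`, `α_k < 0`, and `f = groundState (α_k) (x_k)`. If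
`(α_k/2)e^{-α_k x_k} + ∑_{x_j < x_k} α_j e^{-α_k x_j}
  + e^{-2α_k x_k} ∑_{x_j > x_k} α_j e^{α_k x_j} < 0`,
then `∫ |f'|² dx + ∑_j α_j |f(x_j)|² < 0`. -/
theorem stmt13
    (n : ℕ) (x : Fin n → ℝ) (hx : StrictMono x) (α : Fin n → ℝ)
    (k : Fin n) (hαk : α k < 0)
    (hcond :
      α k / 2 * Real.exp (-(α k) * x k) +
        (∑ j ∈ Finset.univ.filter (fun j => x j < x k), α j * Real.exp (-(α k) * x j)) +
        Real.exp (-2 * α k * x k) *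
          ∑ j ∈ Finset.univ.filter (fun j => x k < x j), α j * Real.exp (α k * x j)
        < 0) :
    (∫ t : ℝ, groundState' (α k) (x k) t ^ 2) +
      (∑ j, α j * groundState (α k) (x k) (x j) ^ 2) < 0 := by
  rw [integral_groundState'_sq hαk, sum_mul_groundState_sq hx.injective]
  linarith
end

section
/- Let a₀ = 1, b₀ = 0 and λ < 0, and for a finite set of points x₁ < … < x_k with strengths α₁, …, α_k ∈ ℝ define recursively (a_j, b_j) from (a_{j−1}, b_{j−1}) by requiring that the piecewise function f(x) = a_j e^{√(−λ)x} + b_j e^{−√(−λ)x} on (x_j, x_{j+1}) is continuous at each x_j and satisfies f′(x_j+) − f′(x_j−) = α_j f(x_j). Then λ is an eigenvalue of −Δ + Σ_{j=1}^k α_j δ_{x_j} if and only if a_k = 0; equivalently, a nonzero f ∈ L²(ℝ) of this piecewise-exponential form satisfying all matching conditions exists iff a_k(λ) = 0. -/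
/-!
With `s = √(-λ)`, an eigenfunction is `c_j e^{s t} + d_j e^{-s t}` between consecutive nodes.
Square integrability kills the growing exponential at both ends: `d₀ = 0` and `c_k = 0`.
The matching conditions at a node are linear and determine the right coefficients uniquely from
the left ones, so `d₀ = 0 = b₀` forces `(c, d) = c₀ • (a, b)`, whence `c_k = c₀ a_k` with `c₀ ≠ 0`
because `f ≠ 0`. Conversely, if `a_k = 0` the glued function `a_j e^{s t} + b_j e^{-s t}` decays
exponentially at both ends.
-/

open MeasureTheory Filter Set Topology

noncomputable section

def expPiece (s c d t : ℝ) : ℝ :=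
  c * Real.exp (s * t) + d * Real.exp (-s * t)

theorem continuous_expPiece (s c d : ℝ) : Continuous (expPiece s c d) := by
  unfold expPiece
  fun_prop

theorem tendsto_abs_expPiece_atTop {s c : ℝ} (hs : 0 < s) (hc : c ≠ 0) (d : ℝ) :
    Tendsto (fun t => |expPiece s c d t|) atTop atTop := by
  have hgrow : Tendsto (fun t => Real.exp (s * t)) atTop atTop :=
    Real.tendsto_exp_atTop.comp (tendsto_id.const_mul_atTop hs)
  have hdecay : Tendsto (fun t => Real.exp (-(2 * s) * t)) atTop (𝓝 0) :=
    Real.tendsto_exp_atBot.comp (tendsto_id.const_mul_atTop_of_neg (by linarith))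
  have hlead : Tendsto (fun t => |c + d * Real.exp (-(2 * s) * t)|) atTop (𝓝 |c|) := by
    simpa using ((hdecay.const_mul d).const_add c).abs
  refine (hgrow.atTop_mul_pos (abs_pos.2 hc) hlead).congr fun t => ?_
  rw [← abs_of_pos (Real.exp_pos (s * t)), ← abs_mul, mul_add, mul_left_comm,
    ← Real.exp_add, expPiece]
  ring_nf

theorem tendsto_abs_expPiece_atBot {s d : ℝ} (hs : 0 < s) (c : ℝ) (hd : d ≠ 0) :
    Tendsto (fun t => |expPiece s c d t|) atBot atTop := by
  refine ((tendsto_abs_expPiece_atTop hs hd c).comp tendsto_neg_atBot_atTop).congr fun t => ?_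
  simp only [Function.comp_apply, expPiece, mul_neg, neg_mul, neg_neg]
  rw [add_comm]

theorem not_memLp_of_tendsto_norm_atTop {E : Type*} [NormedAddCommGroup E] {f : ℝ → E}
    {p : ENNReal} (hp₀ : p ≠ 0) (hp : p ≠ ⊤) (hf : Tendsto (fun t => ‖f t‖) atTop atTop) :
    ¬MemLp f p volume := by
  intro hfp
  obtain ⟨T, hT⟩ := eventually_atTop.1 (hf.eventually_ge_atTop 1)
  have hsub : Ici T ⊆ {t | (1 : NNReal) ≤ ‖f t‖₊} := fun t ht => by
    simpa [← NNReal.coe_le_coe] using hT t ht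
  have := (measure_mono hsub).trans_lt (hfp.meas_ge_lt_top hp₀ hp one_ne_zero)
  simp [Real.volume_Ici] at this

theorem not_memLp_of_tendsto_norm_atBot {E : Type*} [NormedAddCommGroup E] {f : ℝ → E}
    {p : ENNReal} (hp₀ : p ≠ 0) (hp : p ≠ ⊤) (hf : Tendsto (fun t => ‖f t‖) atBot atTop) :
    ¬MemLp f p volume := fun hfp =>
  not_memLp_of_tendsto_norm_atTop hp₀ hp (hf.comp tendsto_neg_atTop_atBot)
    (hfp.comp_measurePreserving (Measure.measurePreserving_neg volume))

theorem memLp_two_iff_of_eq_expPiece {s : ℝ} (hs : 0 < s) {f : ℝ → ℝ} (hf : Continuous f)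
    {A B c d c' d' : ℝ} (hA : ∀ t < A, f t = expPiece s c d t)
    (hB : ∀ t, B < t → f t = expPiece s c' d' t) :
    MemLp f 2 volume ↔ d = 0 ∧ c' = 0 := by
  refine ⟨fun hf₂ => ⟨?_, ?_⟩, ?_⟩
  · by_contra hd
    refine not_memLp_of_tendsto_norm_atBot two_ne_zero ENNReal.ofNat_ne_top ?_ hf₂
    refine (tendsto_abs_expPiece_atBot hs c hd).congr' ?_
    filter_upwards [eventually_lt_atBot A] with t ht
    rw [hA t ht, Real.norm_eq_abs]
  · by_contra hc
    refine not_memLp_of_tendsto_norm_atTop two_ne_zero ENNReal.ofNat_ne_top ?_ hf₂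
    refine (tendsto_abs_expPiece_atTop hs hc d').congr' ?_
    filter_upwards [eventually_gt_atTop B] with t ht
    rw [hB t ht, Real.norm_eq_abs]
  · rintro ⟨rfl, rfl⟩
    rw [memLp_two_iff_integrable_sq hf.aestronglyMeasurable, ← integrableOn_univ]
    have hleft : IntegrableOn (fun t => f t ^ 2) (Iio A) := by
      refine IntegrableOn.congr_fun (((integrableOn_exp_mul_Iic (by positivity : 0 < 2 * s)
        A).mono_set Iio_subset_Iic_self).const_mul (c ^ 2)) (fun t ht => ?_) measurableSet_Iio
      rw [hA t ht, expPiece, zero_mul, add_zero, mul_pow, sq (Real.exp _), ← Real.exp_add]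
      ring_nf
    have hright : IntegrableOn (fun t => f t ^ 2) (Ioi B) := by
      refine IntegrableOn.congr_fun ((integrableOn_exp_mul_Ioi (by linarith : -(2 * s) < 0)
        B).const_mul (d' ^ 2)) (fun t ht => ?_) measurableSet_Ioi
      rw [hB t ht, expPiece, zero_mul, zero_add, mul_pow, sq (Real.exp _), ← Real.exp_add]
      ring_nf
    have hmid : IntegrableOn (fun t => f t ^ 2) (Icc A B) := (hf.pow 2).integrableOn_Icc
    refine ((hleft.union hmid).union hright).mono_set fun t _ => ?_
    rcases lt_or_ge t A with htA | htA
    · exact Or.inl (Or.inl htA)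
    rcases le_or_gt t B with htB | htB
    exacts [Or.inl (Or.inr ⟨htA, htB⟩), Or.inr htB]

-- Continuity at `y` and the jump `f'(y+) - f'(y-) = α f(y)` for the pieces
-- `expPiece s p q` on the left and `expPiece s p' q'` on the right of `y`.
def JumpCondition (s α y p q p' q' : ℝ) : Prop :=
  expPiece s p q y = expPiece s p' q' y ∧
    s * (p' * Real.exp (s * y) - q' * Real.exp (-s * y)) -
        s * (p * Real.exp (s * y) - q * Real.exp (-s * y)) =
      α * expPiece s p' q' y

namespace JumpCondition

variable {s α y p q p' q' : ℝ}

theorem mul (μ : ℝ) (h : JumpCondition s α y p q p' q') :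
    JumpCondition s α y (μ * p) (μ * q) (μ * p') (μ * q') := by
  obtain ⟨h₁, h₂⟩ := h
  unfold JumpCondition expPiece at *
  constructor
  · linear_combination μ * h₁
  · linear_combination μ * h₂

theorem unique (hs : s ≠ 0) {r' u' : ℝ} (h : JumpCondition s α y p q p' q')
    (h' : JumpCondition s α y p q r' u') : p' = r' ∧ q' = u' := by
  obtain ⟨h₁, h₂⟩ := h
  obtain ⟨h₁', h₂'⟩ := h'
  unfold expPiece at *
  have hp : 2 * s * Real.exp (s * y) * (p' - r') = 0 := by
    linear_combination h₂ - h₂' - (s + α) * (h₁ - h₁')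
  have hq : 2 * s * Real.exp (-s * y) * (q' - u') = 0 := by
    linear_combination h₂' - h₂ - (s - α) * (h₁ - h₁')
  simp only [mul_eq_zero, hs, Real.exp_ne_zero, sub_eq_zero, two_ne_zero, or_false,
    false_or] at hp hq
  exact ⟨hp, hq⟩

end JumpCondition

theorem eq_mul_of_jumpCondition {k : ℕ} {s : ℝ} (hs : s ≠ 0) {α x : Fin k → ℝ}
    {a b c d : Fin (k + 1) → ℝ}
    (hab : ∀ j, JumpCondition s (α j) (x j) (a j.castSucc) (b j.castSucc) (a j.succ) (b j.succ))
    (hcd : ∀ j, JumpCondition s (α j) (x j) (c j.castSucc) (d j.castSucc) (c j.succ) (d j.succ))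
    {μ : ℝ} (hc₀ : c 0 = μ * a 0) (hd₀ : d 0 = μ * b 0) (m : Fin (k + 1)) :
    c m = μ * a m ∧ d m = μ * b m := by
  induction m using Fin.induction with
  | zero => exact ⟨hc₀, hd₀⟩
  | succ j ih =>
    have hj := hcd j
    rw [ih.1, ih.2] at hj
    exact hj.unique hs ((hab j).mul μ)

section Pieces

variable {k : ℕ} {x : Fin k → ℝ}

-- Crossing the node `x i` adds `P i.succ - P i.castSucc`; for increasing nodes these
-- corrections telescope, so the function is `P j.succ` between `x j` and the next node.
def gluePieces (x : Fin k → ℝ) (P : Fin (k + 1) → ℝ → ℝ) (t : ℝ) : ℝ :=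
  P 0 t + ∑ i, if x i ≤ t then P i.succ t - P i.castSucc t else 0

theorem continuous_gluePieces {P : Fin (k + 1) → ℝ → ℝ} (hP : ∀ m, Continuous (P m))
    (hjoin : ∀ i, P i.castSucc (x i) = P i.succ (x i)) : Continuous (gluePieces x P) := by
  refine (hP 0).add (continuous_finsetSum _ fun i _ => ?_)
  refine continuous_if_le continuous_const continuous_id ((hP _).sub (hP _)).continuousOn
    continuousOn_const fun t ht => ?_
  simp [← show x i = t from ht, hjoin]

theorem gluePieces_of_forall_lt (P : Fin (k + 1) → ℝ → ℝ) {t : ℝ} (ht : ∀ i, t < x i) :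
    gluePieces x P t = P 0 t := by
  simp [gluePieces, fun i => not_le.2 (ht i)]

theorem gluePieces_of_between (hx : StrictMono x) (P : Fin (k + 1) → ℝ → ℝ) {j : Fin k}
    {t : ℝ} (hjt : x j < t) (hnext : ∀ i, x j < x i → t < x i) :
    gluePieces x P t = P j.succ t := by
  have hnodes : ∀ i, x i ≤ t ↔ i ≤ j := fun i =>
    ⟨fun hit => not_lt.1 fun hji => (hnext i (hx hji)).not_ge hit,
      fun hij => (hx.monotone hij).trans hjt.le⟩
  simp only [gluePieces, hnodes, ← Finset.sum_filter, Finset.filter_ge_eq_Iic,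
    Fin.sum_Iic_sub j (fun m => P m t)]
  ring

theorem forall_lt_or_exists_between (x : Fin k → ℝ) {t : ℝ} (ht : t ∉ range x) :
    (∀ i, t < x i) ∨ ∃ j, x j < t ∧ ∀ i, x j < x i → t < x i := by
  by_cases h : ∃ i, x i < t
  · obtain ⟨i₀, hi₀⟩ := h
    obtain ⟨j, hj, hmax⟩ :=
      Finset.exists_max_image (Finset.univ.filter fun i => x i < t) x ⟨i₀, by simpa using hi₀⟩
    refine Or.inr ⟨j, (Finset.mem_filter.1 hj).2, fun i hji => ?_⟩
    refine lt_of_le_of_ne (not_lt.1 fun hit => hji.not_ge (hmax i ?_)) fun hti => ht ⟨i, hti.symm⟩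
    simpa using hit
  · push Not at h
    exact Or.inl fun i => lt_of_le_of_ne (h i) fun hti => ht ⟨i, hti.symm⟩

theorem eq_zero_of_forall_pieces {E : Type*} [TopologicalSpace E] [T2Space E] [Zero E]
    {f : ℝ → E} (hf : Continuous f) (hleft : ∀ t, (∀ i, t < x i) → f t = 0)
    (hmid : ∀ j t, x j < t → (∀ i, x j < x i → t < x i) → f t = 0) : f = 0 := by
  refine Continuous.ext_on ((finite_range x).countable.dense_compl ℝ) hf continuous_const
    fun t ht => ?_
  rcases forall_lt_or_exists_between x ht with h | ⟨j, hjt, hnext⟩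
  exacts [hleft t h, hmid j t hjt hnext]

end Pieces

theorem eq_last_of_forall_between {n : ℕ} {x : Fin (n + 1) → ℝ} (hx : Monotone x) {f : ℝ → ℝ}
    {g : Fin (n + 2) → ℝ → ℝ} (hmid : ∀ j t, x j < t → (∀ i, x j < x i → t < x i) → f t = g j.succ t)
    {t : ℝ} (ht : x (Fin.last n) < t) : f t = g (Fin.last (n + 1)) t := by
  simpa using hmid (Fin.last n) t ht fun i hi => absurd (hx (Fin.le_last i)) hi.not_ge

end

/-- Transfer-matrix characterization of the negative eigenvalues of
`-Δ + ∑_{j=1}^k α_j δ_{x_j}`. Let `λ < 0`, `s = √(-λ)`, and let `(a_j, b_j)` be the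
coefficients obtained from `a_0 = 1`, `b_0 = 0` by imposing, at each `x_j`, continuity
and the jump condition `f'(x_j+) - f'(x_j-) = α_j f(x_j)` for the piecewise function
`f = a_j e^{s x} + b_j e^{-s x}` on `(x_j, x_{j+1})`. Then a nonzero square-integrable
continuous piecewise-exponential eigenfunction satisfying all matching conditions
exists (i.e. `λ` is an eigenvalue) if and only if `a_k = 0`. -/
theorem stmt19
    (k : ℕ) (hk : 0 < k) (x : Fin k → ℝ) (hx : StrictMono x) (α : Fin k → ℝ)
    (lam : ℝ) (hlam : lam < 0)
    (a b : Fin (k + 1) → ℝ) (ha0 : a 0 = 1) (hb0 : b 0 = 0)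
    (hmatch : ∀ j : Fin k,
      (a j.castSucc * Real.exp (Real.sqrt (-lam) * x j) +
          b j.castSucc * Real.exp (-(Real.sqrt (-lam)) * x j) =
        a j.succ * Real.exp (Real.sqrt (-lam) * x j) +
          b j.succ * Real.exp (-(Real.sqrt (-lam)) * x j)) ∧
      (Real.sqrt (-lam) * (a j.succ * Real.exp (Real.sqrt (-lam) * x j) -
            b j.succ * Real.exp (-(Real.sqrt (-lam)) * x j)) -
          Real.sqrt (-lam) * (a j.castSucc * Real.exp (Real.sqrt (-lam) * x j) -
            b j.castSucc * Real.exp (-(Real.sqrt (-lam)) * x j)) =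
        α j * (a j.succ * Real.exp (Real.sqrt (-lam) * x j) +
          b j.succ * Real.exp (-(Real.sqrt (-lam)) * x j)))) :
    (∃ (c d : Fin (k + 1) → ℝ) (f : ℝ → ℝ),
      Continuous f ∧
      (∀ t : ℝ, t < x ⟨0, hk⟩ →
        f t = c 0 * Real.exp (Real.sqrt (-lam) * t) +
          d 0 * Real.exp (-(Real.sqrt (-lam)) * t)) ∧
      (∀ (j : Fin k) (t : ℝ), x j < t → (∀ i : Fin k, x j < x i → t < x i) →
        f t = c j.succ * Real.exp (Real.sqrt (-lam) * t) +
          d j.succ * Real.exp (-(Real.sqrt (-lam)) * t)) ∧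
      (∀ j : Fin k,
        (c j.castSucc * Real.exp (Real.sqrt (-lam) * x j) +
            d j.castSucc * Real.exp (-(Real.sqrt (-lam)) * x j) =
          c j.succ * Real.exp (Real.sqrt (-lam) * x j) +
            d j.succ * Real.exp (-(Real.sqrt (-lam)) * x j)) ∧
        (Real.sqrt (-lam) * (c j.succ * Real.exp (Real.sqrt (-lam) * x j) -
              d j.succ * Real.exp (-(Real.sqrt (-lam)) * x j)) -
            Real.sqrt (-lam) * (c j.castSucc * Real.exp (Real.sqrt (-lam) * x j) -
              d j.castSucc * Real.exp (-(Real.sqrt (-lam)) * x j)) =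
          α j * (c j.succ * Real.exp (Real.sqrt (-lam) * x j) +
            d j.succ * Real.exp (-(Real.sqrt (-lam)) * x j)))) ∧
      MemLp f 2 volume ∧ f ≠ 0) ↔
    a (Fin.last k) = 0 := by
  obtain ⟨n, rfl⟩ : ∃ n, k = n + 1 := ⟨k - 1, by omega⟩
  set s := Real.sqrt (-lam)
  have hs : 0 < s := Real.sqrt_pos.2 (neg_pos.2 hlam)
  have hab : ∀ j, JumpCondition s (α j) (x j) (a j.castSucc) (b j.castSucc) (a j.succ)
      (b j.succ) := hmatch
  constructor
  · rintro ⟨c, d, f, hf, hleft, hmid, hcd, hf₂, hf₀⟩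
    obtain ⟨hd₀, hc_last⟩ := (memLp_two_iff_of_eq_expPiece hs hf hleft
      fun _ => eq_last_of_forall_between hx.monotone (g := fun m => expPiece s (c m) (d m))
        hmid).1 hf₂
    have hscale := eq_mul_of_jumpCondition hs.ne' hab hcd (μ := c 0) (by rw [ha0, mul_one])
      (by rw [hb0, hd₀, mul_zero])
    have hca : c 0 * a (Fin.last _) = 0 := by rw [← (hscale _).1, hc_last]
    refine (mul_eq_zero.1 hca).resolve_left fun hc₀ => hf₀ ?_
    have hpiece : ∀ m t, expPiece s (c m) (d m) t = 0 := fun m t => by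
      simp [expPiece, (hscale m).1, (hscale m).2, hc₀]
    exact eq_zero_of_forall_pieces hf (fun t ht => (hleft t (ht _)).trans (hpiece 0 t))
      fun j t hjt hnext => (hmid j t hjt hnext).trans (hpiece _ t)
  · intro ha_last
    set P : Fin (n + 2) → ℝ → ℝ := fun m => expPiece s (a m) (b m)
    have hleft : ∀ t < x 0, gluePieces x P t = P 0 t := fun t ht =>
      gluePieces_of_forall_lt P fun i => ht.trans_le (hx.monotone (Fin.zero_le i))
    have hmid : ∀ j t, x j < t → (∀ i, x j < x i → t < x i) → gluePieces x P t = P j.succ t :=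
      fun j t => gluePieces_of_between hx P
    have hf : Continuous (gluePieces x P) :=
      continuous_gluePieces (fun m => continuous_expPiece s (a m) (b m)) fun i => (hab i).1
    refine ⟨a, b, gluePieces x P, hf, hleft, hmid, hmatch, ?_, fun h => ?_⟩
    · exact (memLp_two_iff_of_eq_expPiece hs hf hleft
        fun _ => eq_last_of_forall_between hx.monotone hmid).2 ⟨hb0, ha_last⟩
    · have h₀ := congr_fun h (x 0 - 1)
      rw [Pi.zero_apply, hleft _ (by linarith)] at h₀
      simp [P, expPiece, ha0, hb0, Real.exp_ne_zero] at h₀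
end
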